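/- If the matrix [A a] (an SU matrix whose last column is a) is strongly unimodular, then the matrix [A a a] obtained by repeating the column a is strongly unimodular; likewise, repeating any row of a strongly unimodular matrix yields a strongly unimodular matrix. -/

import Mathlib

/-- A matrix is strongly unimodular if it is totally unimodular and remains totally
unimodular after replacing any single nonzero entry by `0`. -/
def IsStronglyUnimodular {m n : Type*} [DecidableEq m] [DecidableEq n]
    (A : Matrix m n ℚ) : Prop :=
  A.IsTotallyUnimodular ∧
    ∀ i j, A i j ≠ 0 → (A.updateRow i (Function.update (A i) j 0)).IsTotallyUnimodular

/-!
Zeroing an entry outside the two copies `u`, `v` of the repeated column `c` gives a column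
repetition of a matrix that is TU by hypothesis. Zeroing the entry in row `i` of the copy `v`
gives a matrix `M` whose columns `u` and `v` differ only in row `i`, where `M i v = 0`. A square
submatrix of `M` meeting only one of them is a submatrix of `M` with `v` overwritten by `u`, which
is the repeated matrix, or with `u` overwritten by `v`, a column repetition of the original matrix
with `(i, c)` zeroed. One meeting both keeps its determinant when column `u` is subtracted from
column `v`, which leaves `-M i u • eᵢ` with `M i u ∈ {0, ±1}` in column `v`; and a TU matrix stays
TU when a column is replaced by such a vector. Repeating rows is the transposed statement.
-/

namespace Matrix

lemma submatrix_updateCol_of_forall_ne {l o m n α : Type*} [DecidableEq n] (M : Matrix m n α)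
    {j : n} (w : m → α) {f : l → m} {g : o → n} (hg : ∀ x, g x ≠ j) :
    (M.updateCol j w).submatrix f g = M.submatrix f g := by
  ext x y
  simp [updateCol_ne (hg y)]

variable {m n R : Type*} [CommRing R] [DecidableEq m] [DecidableEq n]

lemma updateRow_update_transpose {α : Type*} (A : Matrix m n α) (i : m) (j : n) (x : α) :
    Aᵀ.updateRow j (Function.update (Aᵀ j) i x) =
      (A.updateRow i (Function.update (A i) j x))ᵀ := by
  ext a b
  by_cases ha : a = j <;> by_cases hb : b = i <;> simp [updateRow_apply, ha, hb]

lemma IsTotallyUnimodular.updateCol_single {A : Matrix m n R} (hA : A.IsTotallyUnimodular)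
    (j : n) (i : m) (s : SignType) :
    (A.updateCol j (Pi.single i (s : R))).IsTotallyUnimodular := by
  have hB : ((fromCols A (replicateCol Unit (Pi.single i (s : R))))ᵀ).IsTotallyUnimodular := by
    rw [transpose_fromCols, transpose_replicateCol]
    exact hA.transpose.fromRows_unitlike fun _ _ => ⟨i, s, rfl⟩
  convert hB.transpose.submatrix id fun l => if l = j then Sum.inr () else Sum.inl l using 1
  ext r l
  by_cases hl : l = j <;> simp [hl]

theorem isTotallyUnimodular_of_cols_eq_off_row {M : Matrix m n R} {u v : n} {i : m} (hne : u ≠ v)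
    (huv : ∀ r ≠ i, M r u = M r v) (hv : M i v = 0)
    (hMu : (M.updateCol v fun r => M r u).IsTotallyUnimodular)
    (hMv : (M.updateCol u fun r => M r v).IsTotallyUnimodular) :
    M.IsTotallyUnimodular := by
  obtain ⟨s, hs⟩ := hMu.apply i u
  rw [updateCol_ne hne] at hs
  have hN : (M.updateCol v (Pi.single i ((-s : SignType) : R))).IsTotallyUnimodular := by
    simpa using hMu.updateCol_single v i (-s)
  intro k f g hf hg
  by_cases hgv : ∀ x, g x ≠ v
  · simpa [submatrix_updateCol_of_forall_ne _ _ hgv] using hMu k f g hf hg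
  by_cases hgu : ∀ x, g x ≠ u
  · simpa [submatrix_updateCol_of_forall_ne _ _ hgu] using hMv k f g hf hg
  push Not at hgv hgu
  obtain ⟨q, rfl⟩ := hgv
  obtain ⟨p, rfl⟩ := hgu
  have hqp : q ≠ p := fun h => hne (congrArg g h).symm
  rw [← det_updateCol_add_smul_self _ hqp (-1)]
  convert hN k f g hf hg using 3
  ext a b
  by_cases hb : b = q
  · subst hb
    by_cases ha : f a = i
    · simp [ha, hv, ← hs]
    · simp [ha, huv _ ha]
  · simp [hb, hg.ne hb]

theorem IsTotallyUnimodular.updateRow_update_zero_of_col_eq {P : Matrix m n R}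
    (hP : P.IsTotallyUnimodular) {u v : n} (hne : u ≠ v) (hcol : ∀ r, P r u = P r v) (i : m)
    (hZ : (P.updateRow i
      (Function.update (Function.update (P i) u 0) v 0)).IsTotallyUnimodular) :
    (P.updateRow i (Function.update (P i) v 0)).IsTotallyUnimodular := by
  refine isTotallyUnimodular_of_cols_eq_off_row hne (i := i) (fun r hr => ?_) (by simp) ?_ ?_
  · simp [updateRow_ne hr, hcol]
  · convert hP using 1
    ext r l
    by_cases hr : r = i <;> by_cases hl : l = v <;> simp [updateRow_apply, hr, hl, hne, hcol]
  · convert hZ using 1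
    ext r l
    by_cases hr : r = i <;> by_cases hl : l = u <;>
      simp [updateRow_apply, Function.update_apply, hr, hl, hne, hcol]

end Matrix

open Matrix

section

variable {m n : Type*} [DecidableEq m] [DecidableEq n]

theorem IsStronglyUnimodular.transpose {A : Matrix m n ℚ} (hA : IsStronglyUnimodular A) :
    IsStronglyUnimodular Aᵀ :=
  ⟨hA.1.transpose, fun j i hij => updateRow_update_transpose A i j 0 ▸ (hA.2 i j hij).transpose⟩

theorem IsStronglyUnimodular.fromCols_col {M : Matrix m n ℚ} (hM : IsStronglyUnimodular M)
    (c : n) : IsStronglyUnimodular (fromCols M (of fun i (_ : Unit) => M i c)) := by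
  set T := fromCols M (of fun i (_ : Unit) => M i c)
  set e : n ⊕ Unit → n := Sum.elim id fun _ => c
  have hTU : T.IsTotallyUnimodular := by
    have hT : T = M.submatrix id e := by ext i (j | _) <;> rfl
    exact hT ▸ hM.1.submatrix id e
  refine ⟨hTU, fun i x hx => ?_⟩
  have hZ := (hM.2 i (e x) (by rcases x with _ | _ <;> exact hx)).submatrix id e
  rcases x with j | ⟨⟩
  · by_cases hj : j = c
    · subst hj
      refine hTU.updateRow_update_zero_of_col_eq (u := .inr ()) Sum.inr_ne_inl
        (fun _ => rfl) i ?_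
      convert hZ using 1
      ext r (l | _) <;> by_cases hr : r = i <;>
        simp [updateRow_apply, Function.update_apply, hr, T, e]
    · convert hZ using 1
      ext r (l | _) <;> by_cases hr : r = i <;>
        simp [updateRow_apply, Function.update_apply, hr, Ne.symm hj, T, e]
  · refine hTU.updateRow_update_zero_of_col_eq (u := .inl c) Sum.inl_ne_inr (fun _ => rfl) i ?_
    convert hZ using 1
    ext r (l | _) <;> by_cases hr : r = i <;>
      simp [updateRow_apply, Function.update_apply, hr, T, e]

end

/-- Repeating the last column of a strongly unimodular matrix [A a] yields a strongly
unimodular matrix [A a a]; likewise, repeating any row of a strongly unimodular matrix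
yields a strongly unimodular matrix. -/
theorem isStronglyUnimodular_repeat_col_row {m n : Type*} [DecidableEq m] [DecidableEq n]
    (A : Matrix m n ℚ) :
    (∀ a : m → ℚ,
      IsStronglyUnimodular (Matrix.fromCols A (Matrix.of fun i (_ : Unit) => a i)) →
      IsStronglyUnimodular (Matrix.fromCols
        (Matrix.fromCols A (Matrix.of fun i (_ : Unit) => a i))
        (Matrix.of fun i (_ : Unit) => a i))) ∧
    (IsStronglyUnimodular A → ∀ i₀ : m,
      IsStronglyUnimodular (Matrix.fromRows A (Matrix.of fun (_ : Unit) j => A i₀ j))) :=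
  ⟨fun _ ha => ha.fromCols_col (Sum.inr ()),
    fun hA i₀ => by
      rw [← transpose_transpose (fromRows _ _), transpose_fromRows]
      exact (hA.transpose.fromCols_col i₀).transpose⟩
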